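/- Let d ∈ ℂ and let z¹(ρ) = (d/4)∫₀^ρ s(h1(ρ)h2(s) − h1(s)h2(ρ))h1(s) ds, where h1(ρ) = 2ρ/(ρ²+1) and h2(ρ) = (ρ⁴ + 4ρ² ln ρ − 1)/(ρ(ρ²+1)). Then: (a) z¹ extends to an odd C^∞ function on ℝ with z¹(ρ) = O(ρ³) as ρ → 0; (b) there exists a constant d₁ ∈ ℂ such that z¹(ρ) = d₁ρ − d₁ρ ln ρ + O(ρ^{−1}(ln ρ)²) as ρ → ∞. -/

import Mathlib

noncomputable section
open MeasureTheory Real Set Filter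
open scoped RealInnerProductSpace Topology

/-- The plane `ℝ²` with its Euclidean structure. -/
abbrev V2 : Type := EuclideanSpace ℝ (Fin 2)
/-- The space `ℝ³` with its Euclidean structure. -/
abbrev V3 : Type := EuclideanSpace ℝ (Fin 3)

/-- The point `(a, b) ∈ ℝ²`. -/
def pt2 (a b : ℝ) : V2 := WithLp.toLp 2 ![a, b]

/-- The cross product in `ℝ³`. -/
def cross (u v : V3) : V3 :=
  WithLp.toLp 2 ![u 1 * v 2 - u 2 * v 1, u 2 * v 0 - u 0 * v 2, u 0 * v 1 - u 1 * v 0]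

/-- `e^{θR}`: rotation by angle `θ` about the `x₃`-axis. -/
def rot3 (θ : ℝ) (v : V3) : V3 :=
  WithLp.toLp 2 ![Real.cos θ * v 0 - Real.sin θ * v 1, Real.sin θ * v 0 + Real.cos θ * v 1, v 2]

/-- The generator `R` of horizontal rotations, `Rv = k × v` with `k = (0,0,1)`. -/
def Rgen (v : V3) : V3 := WithLp.toLp 2 ![-(v 1), v 0, 0]

/-- Directional (partial) derivative of a map `ℝ² → ℝ³` in direction `e`. -/
def pd (e : V2) (f : V2 → V3) (x : V2) : V3 := fderiv ℝ f x e

/-- The componentwise Laplacian on `ℝ²`. -/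
def lap (f : V2 → V3) (x : V2) : V3 :=
  pd (pt2 1 0) (pd (pt2 1 0) f) x + pd (pt2 0 1) (pd (pt2 0 1) f) x

/-- Squared homogeneous Sobolev seminorm `‖f‖_{Ḣ^k}² = ∫ |∇^k f|²`. -/
def sobSq (k : ℕ) (f : V2 → V3) : ℝ := ∫ x : V2, ‖iteratedFDeriv ℝ k f x‖ ^ 2

/-- The degree one harmonic map `φ(x) = e^{θR} Q(r)`,
`Q = (h₁, 0, h₃)`, `h₁(r) = 2r/(r²+1)`, `h₃(r) = (r²-1)/(r²+1)`. -/
def phi1 (x : V2) : V3 :=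
  WithLp.toLp 2 ![2 * x 0 / (x 0 ^ 2 + x 1 ^ 2 + 1), 2 * x 1 / (x 0 ^ 2 + x 1 ^ 2 + 1),
    (x 0 ^ 2 + x 1 ^ 2 - 1) / (x 0 ^ 2 + x 1 ^ 2 + 1)]

/-- `h₁(ρ) = 2ρ/(ρ²+1)`. -/
def h1f (ρ : ℝ) : ℝ := 2 * ρ / (ρ ^ 2 + 1)

/-- `h₂(ρ) = (ρ⁴ + 4ρ² ln ρ - 1)/(ρ(ρ²+1))`. -/
def h2f (ρ : ℝ) : ℝ := (ρ ^ 4 + 4 * ρ ^ 2 * Real.log ρ - 1) / (ρ * (ρ ^ 2 + 1))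

/-- The linearized operator `L = -Δ + (1-2h₁²)/ρ²` in radial variables (real-valued). -/
def Lop (f : ℝ → ℝ) (ρ : ℝ) : ℝ :=
  -(deriv (deriv f) ρ) - ρ⁻¹ * deriv f ρ + (1 - 2 * h1f ρ ^ 2) / ρ ^ 2 * f ρ

/-- The linearized operator `L = -Δ + (1-2h₁²)/ρ²` in radial variables (complex-valued). -/
def LopC (f : ℝ → ℂ) (ρ : ℝ) : ℂ :=
  -(deriv (deriv f) ρ) - (ρ⁻¹ : ℝ) * deriv f ρ + ((1 - 2 * h1f ρ ^ 2) / ρ ^ 2 : ℝ) * f ρ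

/-- The operator `𝓛 = -Δ + y⁻² + (i/2) y ∂_y` in radial variables. -/
def Lss (f : ℝ → ℂ) (y : ℝ) : ℂ :=
  -(deriv (deriv f) y) - (y⁻¹ : ℝ) * deriv f y + (((y : ℂ) ^ 2)⁻¹) * f y
    + (Complex.I / 2) * (y : ℝ) * deriv f y

/-- The variation-of-constants solution `z¹` of `Lz = d·h₁` with zero initial data at `ρ = 0`. -/
def z1sol (d : ℂ) (ρ : ℝ) : ℂ :=
  (d / 4) * ((∫ s in (0:ℝ)..ρ, s * (h1f ρ * h2f s - h1f s * h2f ρ) * h1f s : ℝ) : ℂ)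


/-! ### Auxiliary development for `z1sol_asymptotics` -/
open intervalIntegral
open scoped NNReal ENNReal

/-- A primitive of a real-analytic function is real-analytic. -/
lemma analyticAt_primitive {f F : ℝ → ℝ} {x₀ : ℝ} (hf : AnalyticAt ℝ f x₀)
    (hF : ∀ x, HasDerivAt F (f x) x) : AnalyticAt ℝ F x₀ := by
  obtain ⟨p, r, hp⟩ := hf
  obtain ⟨r₁, hr₁pos, hr₁r⟩ : ∃ r₁ : ℝ≥0, 0 < r₁ ∧ (r₁ : ℝ≥0∞) < r := by
    rcases ENNReal.lt_iff_exists_nnreal_btwn.mp hp.r_pos with ⟨cc, hc0, hcr⟩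
    refine ⟨cc, ?_, hcr⟩
    · have : (0:ℝ≥0∞) < cc := hc0
      exact_mod_cast this
  set r₀ : ℝ≥0 := r₁ / 2 with hr₀def
  have hr₁pos' : (0:ℝ) < r₁ := hr₁pos
  have hr₀pos : 0 < r₀ := by
    rw [hr₀def]; positivity
  have hr₀pos' : (0:ℝ) < r₀ := hr₀pos
  have hr₀r₁ : (r₀ : ℝ) < r₁ := by
    have : (r₀ : ℝ) = (r₁:ℝ)/2 := by rw [hr₀def]; push_cast; ring
    rw [this]; linarith
  have hrad : (r₁ : ℝ≥0∞) < p.radius := lt_of_lt_of_le hr₁r hp.r_le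
  obtain ⟨C, hCpos, hC⟩ := p.norm_mul_pow_le_of_lt_radius hrad
  set c : ℕ → ℝ := fun n => p.coeff n with hc
  have hcb : ∀ n, |c n| * (r₁:ℝ) ^ n ≤ C := by
    intro n
    have := hC n
    rwa [p.norm_apply_eq_norm_coef, Real.norm_eq_abs] at this
  set a : ℕ → ℝ := fun n => Nat.casesOn n (F x₀) (fun m => c m / (m + 1)) with ha
  set q : FormalMultilinearSeries ℝ ℝ ℝ := FormalMultilinearSeries.ofScalars ℝ a with hq
  have hqrad : (r₀ : ℝ≥0∞) ≤ q.radius := by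
    apply q.le_radius_of_bound (max (|F x₀|) (C * r₁))
    intro n
    have hqnorm : ‖q n‖ = |a n| := by
      rw [hq, FormalMultilinearSeries.ofScalars_norm, Real.norm_eq_abs]
    rw [hqnorm]
    match n with
    | 0 => simpa [ha] using le_max_left (|F x₀|) (C * r₁)
    | Nat.succ m =>
      have h1 : |a (m+1)| ≤ |c m| := by
        simp only [ha]
        rw [abs_div, abs_of_pos (by positivity : (0:ℝ) < (m:ℝ)+1)]
        apply div_le_self (abs_nonneg _) (by norm_num)
      refine le_trans ?_ (le_max_right (|F x₀|) (C * r₁))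
      calc |a (m+1)| * (r₀:ℝ)^(m+1)
          ≤ |c m| * (r₁:ℝ)^(m+1) := by
            apply mul_le_mul h1 (pow_le_pow_left₀ r₀.coe_nonneg hr₀r₁.le _)
              (by positivity) (abs_nonneg _)
        _ = (|c m| * (r₁:ℝ)^m) * r₁ := by ring
        _ ≤ C * r₁ := by
            apply mul_le_mul_of_nonneg_right (hcb m) r₁.coe_nonneg
  -- the summable bound for derivatives
  set u : ℕ → ℝ := fun n => C * ((r₀:ℝ)/(r₁:ℝ))^n with hu
  have husum : Summable u := by
    apply Summable.mul_left
    apply summable_geometric_of_lt_one (by positivity)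
    rw [div_lt_one hr₁pos']; exact hr₀r₁
  set t : Set ℝ := Metric.ball (0:ℝ) r₀ with ht
  have htopen : IsOpen t := Metric.isOpen_ball
  have htconn : IsPreconnected t := (convex_ball _ _).isPreconnected
  have h0t : (0:ℝ) ∈ t := Metric.mem_ball_self hr₀pos'
  set G : ℕ → ℝ → ℝ := fun n z => a (n+1) * z^(n+1) with hG
  set G' : ℕ → ℝ → ℝ := fun n z => c n * z^n with hG'
  have hGd : ∀ n z, z ∈ t → HasDerivAt (G n) (G' n z) z := by
    intro n z _
    have h := (hasDerivAt_pow (n+1) z).const_mul (a (n+1))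
    have he : a (n+1) * (((n:ℕ)+1 : ℕ) * z^(n+1-1)) = c n * z^n := by
      have h2 : a (n+1) = c n / ((n:ℝ)+1) := by simp [ha]
      push_cast
      rw [h2]; field_simp
    simp only [hG, hG']
    exact he ▸ h
  have hG'b : ∀ n z, z ∈ t → ‖G' n z‖ ≤ u n := by
    intro n z hz
    rw [Metric.mem_ball, dist_zero_right, Real.norm_eq_abs] at hz
    rw [hG', Real.norm_eq_abs, hu, abs_mul, abs_pow]
    have h1 : |c n| * |z|^n ≤ |c n| * (r₀:ℝ)^n := by
      apply mul_le_mul_of_nonneg_left (pow_le_pow_left₀ (abs_nonneg _) hz.le _) (abs_nonneg _)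
    have h2 : |c n| * (r₀:ℝ)^n ≤ C * ((r₀:ℝ)/(r₁:ℝ))^n := by
      rw [div_pow, mul_div_assoc']
      rw [le_div_iff₀ (by positivity)]
      calc |c n| * (r₀:ℝ)^n * (r₁:ℝ)^n = (|c n| * (r₁:ℝ)^n) * (r₀:ℝ)^n := by ring
        _ ≤ C * (r₀:ℝ)^n := mul_le_mul_of_nonneg_right (hcb n) (by positivity)
        _ = C * (r₀:ℝ)^n := rfl
    exact le_trans h1 h2
  have hG0 : Summable fun n => G n 0 := by
    apply summable_of_ne_finset_zero (s := ∅)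
    intro n _
    simp [hG]
  set S : ℝ → ℝ := fun z => ∑' n, G n z with hS
  -- sum of the derivative series is f (x₀ + y)
  have hfsum : ∀ y ∈ t, HasSum (fun n => G' n y) (f (x₀ + y)) := by
    intro y hy
    rw [Metric.mem_ball, dist_zero_right, Real.norm_eq_abs] at hy
    have hyr : y ∈ Metric.eball (0:ℝ) r := by
      rw [Metric.mem_eball, edist_zero_right]
      calc (‖y‖₊ : ℝ≥0∞) < (r₁ : ℝ≥0∞) := by
            rw [ENNReal.coe_lt_coe, ← NNReal.coe_lt_coe]
            calc (‖y‖₊ : ℝ) = |y| := rfl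
              _ < (r₀:ℝ) := hy
              _ < r₁ := hr₀r₁
        _ < r := hr₁r
    have := hp.hasSum (y := y) hyr
    have heq : (fun n => p n fun _ => y) = fun n => G' n y := by
      funext n
      rw [p.apply_eq_pow_smul_coeff, smul_eq_mul, hG']
      ring
    rwa [heq] at this
  have hSd : ∀ y ∈ t, HasDerivAt S (f (x₀ + y)) y := by
    intro y hy
    have := hasDerivAt_tsum_of_isPreconnected husum htopen htconn hGd hG'b h0t hG0 hy
    rwa [(hfsum y hy).tsum_eq] at this
  have hSsum : ∀ y ∈ t, Summable fun n => G n y := by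
    intro y hy
    exact summable_of_summable_hasDerivAt_of_isPreconnected husum htopen htconn hGd hG'b h0t hG0 hy
  have hS0 : S 0 = 0 := by
    rw [hS]
    convert tsum_zero with n
    simp [hG]
  -- F (x₀ + y) = F x₀ + S y on t
  have hFS : ∀ y ∈ t, F (x₀ + y) = F x₀ + S y := by
    intro y hy
    rw [Metric.mem_ball, dist_zero_right, Real.norm_eq_abs] at hy
    have hsub : uIcc (0:ℝ) y ⊆ t := by
      intro x hx
      rw [Metric.mem_ball, dist_zero_right, Real.norm_eq_abs]
      rcases le_total (0:ℝ) y with h | h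
      · rw [uIcc_of_le h] at hx
        rw [abs_of_nonneg hx.1]
        calc x ≤ y := hx.2
          _ ≤ |y| := le_abs_self y
          _ < r₀ := hy
      · rw [uIcc_of_ge h] at hx
        rw [abs_of_nonpos hx.2]
        calc -x ≤ -y := by linarith [hx.1]
          _ ≤ |y| := neg_le_abs y
          _ < r₀ := hy
    have hphi : ∀ x ∈ uIcc (0:ℝ) y, HasDerivAt (fun z => F (x₀ + z) - S z) 0 x := by
      intro x hx
      have h1 : HasDerivAt (fun z : ℝ => F (x₀ + z)) (f (x₀ + x)) x := by
        have := (hF (x₀ + x)).comp x ((hasDerivAt_id x).const_add x₀)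
        simpa [Function.comp_def] using this
      have h2 := hSd x (hsub hx)
      have h3 := h1.sub h2; rw [sub_self] at h3; exact h3
    have hint := intervalIntegral.integral_eq_sub_of_hasDerivAt hphi
      (_root_.intervalIntegrable_const (c := (0:ℝ)))
    simp only [intervalIntegral.integral_zero] at hint
    rw [hS0, add_zero] at hint
    linarith [hint]
  -- conclude
  have : HasFPowerSeriesOnBall F q x₀ (r₀ : ℝ≥0∞) := by
    refine ⟨hqrad, by exact_mod_cast hr₀pos, ?_⟩
    intro y hy
    have hyt : y ∈ t := by
      rw [EMetric.mem_ball, edist_zero_right] at hy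
      rw [Metric.mem_ball, dist_zero_right]
      exact_mod_cast hy
    have h1 : HasSum (fun n => G n y) (S y) := (hSsum y hyt).hasSum
    have h2 : HasSum (fun n => a n * y^n) (S y + ∑ i ∈ Finset.range 1, a i * y^i) := by
      apply (hasSum_nat_add_iff 1).mp
      convert h1 with n
    have h3 : S y + ∑ i ∈ Finset.range 1, a i * y^i = F (x₀ + y) := by
      rw [Finset.sum_range_one, pow_zero, mul_one]
      rw [hFS y hyt]
      have : a 0 = F x₀ := rfl
      rw [this]; ring
    rw [h3] at h2
    have heq : (fun n => q n fun _ => y) = fun n => a n * y^n := by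
      funext n
      rw [hq, FormalMultilinearSeries.ofScalars_apply_eq, smul_eq_mul]
    rwa [heq]
  exact this.analyticAt


def hfun : ℝ → ℝ := dslope (fun x : ℝ => Real.log (1 + x)) 0

lemma log_one_add_eq (x : ℝ) : Real.log (1 + x) = x * hfun x := by
  have h := sub_smul_dslope (fun x : ℝ => Real.log (1 + x)) 0 x
  simp only [sub_zero, smul_eq_mul] at h
  simpa [hfun] using h.symm

/-- `Real.log` is analytic at positive points. -/
lemma analyticAt_rlog {x : ℝ} (hx : 0 < x) : AnalyticAt ℝ Real.log x := by
  have h2 : AnalyticAt ℂ Complex.log ((x : ℝ) : ℂ) := by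
    apply analyticAt_clog
    exact Complex.ofReal_mem_slitPlane.mpr hx
  have h3 : AnalyticAt ℝ (fun y : ℝ => Complex.log y) x := by
    have := AnalyticAt.comp (𝕜 := ℝ) (g := Complex.log)
      (f := fun y : ℝ => (y : ℂ)) (x := x) (h2.restrictScalars (𝕜 := ℝ))
      (Complex.ofRealCLM.analyticAt x)
    simpa [Function.comp_def] using this
  have h4 : AnalyticAt ℝ (fun y : ℝ => (Complex.log y).re) x :=
    (Complex.reCLM.analyticAt _).comp h3
  have : Real.log = fun y : ℝ => (Complex.log y).re := by
    funext y
    rw [Complex.log_re, Complex.norm_real, Real.norm_eq_abs, Real.log_abs]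
  rw [this]
  exact h4

lemma analyticAt_log_one_add : AnalyticAt ℝ (fun x : ℝ => Real.log (1 + x)) 0 := by
  have := (analyticAt_rlog (x := 1 + (0:ℝ)) (by norm_num)).comp
    ((analyticAt_const (v := (1:ℝ))).add (analyticAt_id))
  simpa [Function.comp_def] using this

lemma hfun_analyticAt_zero : AnalyticAt ℝ hfun 0 := by
  obtain ⟨p, hp⟩ := analyticAt_log_one_add
  exact (hp.has_fpower_series_dslope_fslope.analyticAt)

lemma hfun_analyticAt_pos {x : ℝ} (hx : 0 < x) : AnalyticAt ℝ hfun x := by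
  have hev : (fun y : ℝ => Real.log (1 + y) / y) =ᶠ[nhds x] hfun := by
    filter_upwards [eventually_ne_nhds (ne_of_gt hx)] with y hy
    rw [hfun, dslope_of_ne _ hy, slope_def_field]
    simp [div_eq_div_iff]
  apply AnalyticAt.congr _ hev
  apply AnalyticAt.div
  · exact (analyticAt_rlog (by linarith)).comp
      ((analyticAt_const (v := (1:ℝ))).add analyticAt_id)
  · exact analyticAt_id
  · exact ne_of_gt hx

def lfun (ρ : ℝ) : ℝ := Real.log (1 + ρ ^ 2) / ρ

lemma lfun_eq (ρ : ℝ) : lfun ρ = ρ * hfun (ρ ^ 2) := by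
  rcases eq_or_ne ρ 0 with h | h
  · simp [lfun, h]
  · rw [lfun, log_one_add_eq]
    field_simp

lemma lfun_analyticAt (ρ : ℝ) : AnalyticAt ℝ lfun ρ := by
  have : AnalyticAt ℝ (fun ρ : ℝ => ρ * hfun (ρ ^ 2)) ρ := by
    apply AnalyticAt.mul analyticAt_id
    apply AnalyticAt.comp
    · rcases eq_or_ne ρ 0 with h | h
      · rw [h]; simp only [ne_eq, OfNat.ofNat_ne_zero, not_false_eq_true, zero_pow]; exact hfun_analyticAt_zero
      · exact hfun_analyticAt_pos (by positivity)
    · exact analyticAt_id.pow 2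
  exact this.congr (Eventually.of_forall fun x => (lfun_eq x).symm)

lemma lfun_cont : Continuous lfun :=
  continuous_iff_continuousAt.mpr fun ρ => (lfun_analyticAt ρ).continuousAt

lemma lfun_odd (ρ : ℝ) : lfun (-ρ) = -lfun ρ := by
  simp [lfun, neg_sq, div_neg]

lemma log_one_add_le {x : ℝ} (hx : 0 ≤ x) : Real.log (1 + x) ≤ x := by
  have := Real.log_le_sub_one_of_pos (x := 1 + x) (by linarith)
  linarith

lemma le_log_one_add {x : ℝ} (hx : 0 ≤ x) : x / (1 + x) ≤ Real.log (1 + x) := by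
  have h1 : (0:ℝ) < 1 + x := by linarith
  have h := Real.log_le_sub_one_of_pos (x := (1 + x)⁻¹) (by positivity)
  rw [Real.log_inv] at h
  have h3 : x / (1 + x) = 1 - (1 + x)⁻¹ := by field_simp; ring
  rw [h3]; linarith

lemma lfun_nonneg {ρ : ℝ} (hρ : 0 ≤ ρ) : 0 ≤ lfun ρ := by
  apply div_nonneg _ hρ
  apply Real.log_nonneg; nlinarith

lemma lfun_le {ρ : ℝ} (hρ : 0 ≤ ρ) : lfun ρ ≤ ρ := by
  rcases eq_or_lt_of_le hρ with h | h
  · simp [lfun, ← h]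
  · rw [lfun, div_le_iff₀ h]
    calc Real.log (1 + ρ^2) ≤ ρ^2 := log_one_add_le (by positivity)
    _ = ρ * ρ := sq ρ

lemma lfun_cubic_bound (ρ : ℝ) : |2 * lfun ρ - 2 * ρ / (1 + ρ^2)| ≤ 2 * |ρ|^3 := by
  have key : ∀ s : ℝ, 0 ≤ s → |2 * lfun s - 2 * s / (1 + s^2)| ≤ 2 * |s|^3 := by
    intro s hs
    rcases eq_or_lt_of_le hs with h | h
    · simp [lfun, ← h]
    · have h1 : (0:ℝ) < 1 + s ^ 2 := by positivity
      have hup : Real.log (1 + s^2) ≤ s^2 := log_one_add_le (by positivity)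
      have hlo : s^2 / (1 + s^2) ≤ Real.log (1 + s^2) := le_log_one_add (by positivity)
      have e : 2 * lfun s - 2 * s / (1 + s^2) = (2/s) * (Real.log (1+s^2) - s^2/(1+s^2)) := by
        rw [lfun]; field_simp
      rw [e, abs_mul, abs_of_nonneg (show (0:ℝ) ≤ 2/s by positivity),
        abs_of_nonneg (show (0:ℝ) ≤ Real.log (1+s^2) - s^2/(1+s^2) by linarith),
        abs_of_nonneg hs]
      have hub : Real.log (1+s^2) - s^2/(1+s^2) ≤ s^4 := by
        have h5 : s^2 - s^2/(1+s^2) ≤ s^4 := by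
          rw [sub_le_iff_le_add]
          rw [show s^4 + s^2/(1+s^2) = (s^4*(1+s^2) + s^2)/(1+s^2) by field_simp]
          rw [le_div_iff₀ h1]
          nlinarith [pow_nonneg hs 6, pow_nonneg hs 4, sq_nonneg s]
        linarith
      calc (2/s) * (Real.log (1+s^2) - s^2/(1+s^2)) ≤ (2/s) * s^4 :=
            mul_le_mul_of_nonneg_left hub (by positivity)
        _ = 2 * s^3 := by field_simp
  rcases le_or_gt 0 ρ with h | h
  · exact key ρ h
  · have hk := key (-ρ) (by linarith)
    rw [lfun_odd, neg_sq, abs_neg] at hk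
    have he : 2 * -lfun ρ - 2 * -ρ / (1 + ρ^2) = -(2 * lfun ρ - 2 * ρ / (1 + ρ^2)) := by ring
    rwa [he, abs_neg] at hk

def Dfun (ρ : ℝ) : ℝ := ∫ u in (0:ℝ)..ρ, lfun u

lemma Dfun_hasDerivAt (ρ : ℝ) : HasDerivAt Dfun (lfun ρ) ρ :=
  integral_hasDerivAt_right (lfun_cont.intervalIntegrable _ _)
    (lfun_cont.stronglyMeasurableAtFilter _ _) lfun_cont.continuousAt

lemma Dfun_analyticAt (ρ : ℝ) : AnalyticAt ℝ Dfun ρ :=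
  analyticAt_primitive (lfun_analyticAt ρ) Dfun_hasDerivAt

lemma Dfun_cont : Continuous Dfun :=
  continuous_iff_continuousAt.mpr fun ρ => (Dfun_analyticAt ρ).continuousAt

lemma Dfun_even (ρ : ℝ) : Dfun (-ρ) = Dfun ρ := by
  have h := intervalIntegral.integral_comp_neg (a := (0:ℝ)) (b := ρ) lfun
  simp only [neg_zero] at h
  have h2 : ∫ x in (0:ℝ)..ρ, lfun (-x) = -Dfun ρ := by
    simp only [lfun_odd]
    rw [intervalIntegral.integral_neg, Dfun]
  have h3 : ∫ x in (-ρ)..(0:ℝ), lfun x = -Dfun (-ρ) := by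
    rw [intervalIntegral.integral_symm, Dfun]
  rw [h2, h3] at h
  linarith

lemma Dfun_nonneg {ρ : ℝ} (hρ : 0 ≤ ρ) : 0 ≤ Dfun ρ := by
  have h : (∫ u in (0:ℝ)..ρ, (0:ℝ)) ≤ ∫ u in (0:ℝ)..ρ, lfun u := by
    apply intervalIntegral.integral_mono_on hρ (by simp) (lfun_cont.intervalIntegrable _ _)
    intro x hx; exact lfun_nonneg hx.1
  simpa [Dfun] using h

lemma Dfun_le_sq {ρ : ℝ} (hρ : 0 ≤ ρ) : Dfun ρ ≤ ρ^2 / 2 := by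
  have h : Dfun ρ ≤ ∫ u in (0:ℝ)..ρ, u := by
    apply intervalIntegral.integral_mono_on hρ (lfun_cont.intervalIntegrable _ _)
      (continuous_id.intervalIntegrable _ _)
    intro x hx; exact lfun_le hx.1
  simpa [integral_id] using h

lemma Dfun_abs_le (ρ : ℝ) : |Dfun ρ| ≤ ρ^2/2 := by
  rcases le_or_gt 0 ρ with h | h
  · rw [abs_of_nonneg (Dfun_nonneg h)]; exact Dfun_le_sq h
  · have h1 := Dfun_nonneg (show (0:ℝ) ≤ -ρ by linarith)
    have h2 := Dfun_le_sq (show (0:ℝ) ≤ -ρ by linarith)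
    rw [Dfun_even] at h1 h2
    rw [neg_sq] at h2
    rw [abs_of_nonneg h1]; exact h2



def Bfun (ρ : ℝ) : ℝ := 2 * Real.log (1 + ρ^2) + 2/(1+ρ^2) - 2
def N1 (s : ℝ) : ℝ := 2*s*(s^4 + 4*s^2*Real.log s - 1)/((s^2+1)^2)
def N2 (s : ℝ) : ℝ := 4*s^3/((s^2+1)^2)

lemma N1_cont : Continuous N1 := by
  have h : Continuous (fun s : ℝ => 2*s*(s^4 + 4*s^2*Real.log s - 1)) := by
    have he : (fun s : ℝ => 2*s*(s^4 + 4*s^2*Real.log s - 1))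
        = fun s => 2*s*(s^4 - 1) + 8*(s*(s*(s*Real.log s))) := by -- keep
      funext s; ring
    rw [he]
    apply Continuous.add
    · exact (continuous_const.mul continuous_id).mul (by continuity)
    · exact continuous_const.mul (continuous_id.mul (continuous_id.mul Real.continuous_mul_log))
  apply h.div (by continuity)
  intro s; positivity

lemma N2_cont : Continuous N2 := by
  apply Continuous.div (by continuity) (by continuity)
  intro s; positivity

lemma hN1 (s : ℝ) : s * h1f s * h2f s = N1 s := by
  rcases eq_or_ne s 0 with h | h
  · simp [h, h1f, h2f, N1]
  · rw [h1f, h2f, N1]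
    have h1 : s^2 + 1 ≠ 0 := by positivity
    field_simp

lemma hN2 (s : ℝ) : s * h1f s * h1f s = N2 s := by
  rcases eq_or_ne s 0 with h | h
  · simp [h, h1f, N2]
  · rw [h1f, N2]
    have h1 : s^2 + 1 ≠ 0 := by positivity
    field_simp
    ring

lemma integrand_eq (a b s : ℝ) :
    s * (a * h2f s - h1f s * b) * h1f s = a * N1 s - b * N2 s := by
  rw [← hN1 s, ← hN2 s]; ring

lemma Bfun_hasDerivAt (s : ℝ) : HasDerivAt Bfun (N2 s) s := by
  have h1 : (0:ℝ) < 1 + s^2 := by positivity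
  have hlog : HasDerivAt (fun ρ : ℝ => 2 * Real.log (1+ρ^2)) (2 * (2*s / (1+s^2))) s := by
    have hin : HasDerivAt (fun ρ : ℝ => 1 + ρ^2) (2*s) s := by
      simpa using ((hasDerivAt_pow 2 s).const_add 1)
    exact (hin.log (ne_of_gt h1)).const_mul 2
  have hinv : HasDerivAt (fun ρ : ℝ => 2/(1+ρ^2)) (-(2*s) * 2 / (1+s^2)^2) s := by
    have hin : HasDerivAt (fun ρ : ℝ => 1 + ρ^2) (2*s) s := by
      simpa using ((hasDerivAt_pow 2 s).const_add 1)
    have h2 : HasDerivAt (fun ρ : ℝ => 2/(1+ρ^2)) _ s := HasDerivAt.div (hasDerivAt_const s (2:ℝ)) hin (ne_of_gt h1)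
    convert h2 using 1
    ring
  have hsum := (hlog.add hinv).sub_const 2
  have hBd : HasDerivAt Bfun (2*(2*s/(1+s^2)) + -(2*s)*2/(1+s^2)^2) s := hsum
  convert hBd using 1
  rw [N2]
  have h2 : s^2 + 1 ≠ 0 := by positivity
  field_simp
  ring

lemma Bfun_zero : Bfun 0 = 0 := by simp [Bfun]

lemma B_int (ρ : ℝ) : ∫ s in (0:ℝ)..ρ, N2 s = Bfun ρ := by
  rw [intervalIntegral.integral_eq_sub_of_hasDerivAt
    (fun x _ => Bfun_hasDerivAt x) (N2_cont.intervalIntegrable _ _), Bfun_zero, sub_zero]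

lemma Bfun_nonneg {ρ : ℝ} : 0 ≤ Bfun ρ := by
  have h1 : (0:ℝ) < 1 + ρ^2 := by positivity
  have := le_log_one_add (show (0:ℝ) ≤ ρ^2 by positivity)
  rw [Bfun]
  have h2 : ρ^2/(1+ρ^2) + 1/(1+ρ^2) = 1 := by
    rw [← add_div, div_eq_one_iff_eq (ne_of_gt h1)]; ring
  have h4 : 2/(1+ρ^2) = 2*(1/(1+ρ^2)) := by ring
  linarith

lemma Bfun_le {ρ : ℝ} : Bfun ρ ≤ 2*ρ^4 := by
  have h1 : (0:ℝ) < 1 + ρ^2 := by positivity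
  have := log_one_add_le (show (0:ℝ) ≤ ρ^2 by positivity)
  rw [Bfun]
  have h5 : 2/(1+ρ^2) ≤ 2 - 2*ρ^2 + 2*ρ^4 := by
    rw [div_le_iff₀ h1]; nlinarith [sq_nonneg ρ, sq_nonneg (ρ^2), sq_nonneg (ρ^3)]
  linarith

def Phi (ρ : ℝ) : ℝ := ρ^2 + 2 * Real.log ρ * Bfun ρ - 4 * Dfun ρ

lemma Phi_hasDerivAt {s : ℝ} (hs : 0 < s) : HasDerivAt Phi (N1 s) s := by
  have h1 : (0:ℝ) < 1 + s^2 := by positivity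
  have hsq : HasDerivAt (fun ρ : ℝ => ρ^2) (2*s) s := by simpa using hasDerivAt_pow 2 s
  have hlog : HasDerivAt (fun ρ : ℝ => 2 * Real.log ρ) (2 * s⁻¹) s :=
    (Real.hasDerivAt_log (ne_of_gt hs)).const_mul 2
  have hprod : HasDerivAt (fun ρ : ℝ => 2 * Real.log ρ * Bfun ρ)
      (2 * s⁻¹ * Bfun s + 2 * Real.log s * N2 s) s := hlog.mul (Bfun_hasDerivAt s)
  have hD : HasDerivAt (fun ρ : ℝ => 4 * Dfun ρ) (4 * lfun s) s :=
    (Dfun_hasDerivAt s).const_mul 4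
  have h := (hsq.add hprod).sub hD
  have heq : 2*s + (2 * s⁻¹ * Bfun s + 2 * Real.log s * N2 s) - 4 * lfun s = N1 s := by
    rw [Bfun, N2, N1, lfun]
    have h2 : s ≠ 0 := ne_of_gt hs
    have h3 : s^2 + 1 ≠ 0 := by positivity
    have h4 : (1:ℝ) + s^2 ≠ 0 := by positivity
    field_simp
    ring
  rw [heq] at h
  exact h

lemma IA_hasDerivAt (ρ : ℝ) :
    HasDerivAt (fun c => ∫ s in (0:ℝ)..c, N1 s) (N1 ρ) ρ :=
  integral_hasDerivAt_right (N1_cont.intervalIntegrable _ _)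
    (N1_cont.stronglyMeasurableAtFilter _ _) N1_cont.continuousAt

lemma neg_log_le_inv {c : ℝ} (hc : 0 < c) : -Real.log c ≤ 1/c := by
  have h := Real.log_le_sub_one_of_pos (inv_pos.mpr hc)
  rw [Real.log_inv] at h
  rw [one_div]
  linarith

lemma A_int {ρ : ℝ} (hρ : 0 < ρ) : ∫ s in (0:ℝ)..ρ, N1 s = Phi ρ := by
  set IA : ℝ → ℝ := fun c => ∫ s in (0:ℝ)..c, N1 s with hIA
  -- constancy of IA - Phi on (0, ρ]
  have key : ∀ c ∈ Ioo (0:ℝ) ρ, IA ρ - Phi ρ = IA c - Phi c := by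
    intro c hc
    have hsub : uIcc c ρ ⊆ Ioi (0:ℝ) := by
      rw [uIcc_of_le hc.2.le]
      intro x hx
      exact lt_of_lt_of_le hc.1 hx.1
    have hftc : ∫ s in c..ρ, N1 s = Phi ρ - Phi c :=
      intervalIntegral.integral_eq_sub_of_hasDerivAt
        (fun x hx => Phi_hasDerivAt (hsub hx)) (N1_cont.intervalIntegrable _ _)
    have hadd : IA c + ∫ s in c..ρ, N1 s = IA ρ :=
      intervalIntegral.integral_add_adjacent_intervals
        (N1_cont.intervalIntegrable _ _) (N1_cont.intervalIntegrable _ _)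
    rw [hftc] at hadd
    linarith
  -- limits
  have hIA0 : Tendsto IA (nhdsWithin 0 (Ioi 0)) (nhds 0) := by
    have h0 : (∫ s in (0:ℝ)..(0:ℝ), N1 s) = 0 := by simp
    have h := (IA_hasDerivAt 0).continuousAt.tendsto
    rw [h0] at h
    exact h.mono_left nhdsWithin_le_nhds
  have hPhi0 : Tendsto Phi (nhdsWithin 0 (Ioi 0)) (nhds 0) := by
    have h1 : Tendsto (fun c : ℝ => c^2 - 4 * Dfun c) (nhdsWithin 0 (Ioi 0)) (nhds 0) := by
      have hD : Tendsto (fun c : ℝ => c^2 - 4 * Dfun c) (nhds 0) (nhds (0^2 - 4 * Dfun 0)) := by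
        apply Tendsto.sub
        · exact (continuous_pow 2).tendsto 0
        · exact (Dfun_cont.tendsto 0).const_mul 4
      have hD0 : Dfun 0 = 0 := by simp [Dfun]
      rw [hD0] at hD
      simpa using hD.mono_left nhdsWithin_le_nhds
    have h2 : Tendsto (fun c : ℝ => 2 * Real.log c * Bfun c) (nhdsWithin 0 (Ioi 0)) (nhds 0) := by
      have hb : ∀ᶠ c in nhdsWithin 0 (Ioi 0), ‖2 * Real.log c * Bfun c‖ ≤ 4 * c^3 := by
        filter_upwards [Ioo_mem_nhdsGT_of_mem (Set.left_mem_Ico.mpr one_pos)] with c hc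
        have hc0 : (0:ℝ) < c := hc.1
        have hc1 : c < 1 := hc.2
        have hlogle : |Real.log c| ≤ 1/c := by
          rw [abs_of_nonpos (Real.log_nonpos hc0.le hc1.le)]
          exact neg_log_le_inv hc0
        have hBle : |Bfun c| ≤ 2*c^4 := by
          rw [abs_of_nonneg Bfun_nonneg]; exact Bfun_le
        calc ‖2 * Real.log c * Bfun c‖ = 2 * |Real.log c| * |Bfun c| := by
              rw [Real.norm_eq_abs, abs_mul, abs_mul]; norm_num
          _ ≤ 2 * (1/c) * (2*c^4) := by
              apply mul_le_mul _ hBle (abs_nonneg _) (by positivity)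
              apply mul_le_mul_of_nonneg_left hlogle (by norm_num)
          _ = 4 * c^3 := by field_simp; ring
      have hg : Tendsto (fun c : ℝ => 4 * c^3) (nhdsWithin 0 (Ioi 0)) (nhds 0) := by
        have h : Tendsto (fun c : ℝ => 4 * c^3) (nhds 0) (nhds (4 * (0:ℝ)^3)) :=
          ((continuous_pow 3).tendsto (0:ℝ)).const_mul 4
        norm_num at h
        exact h.mono_left nhdsWithin_le_nhds
      exact squeeze_zero_norm' hb hg
    have := (h1.add h2)
    simp only [add_zero] at this
    convert this using 2 with c
    rw [Phi]; ring
  have hconst : Tendsto (fun c => IA c - Phi c) (nhdsWithin 0 (Ioi 0)) (nhds 0) := by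
    simpa using hIA0.sub hPhi0
  have hconst2 : Tendsto (fun _ : ℝ => IA ρ - Phi ρ) (nhdsWithin 0 (Ioi 0))
      (nhds (IA ρ - Phi ρ)) := tendsto_const_nhds
  have hev : (fun c => IA c - Phi c) =ᶠ[nhdsWithin 0 (Ioi 0)] fun _ => IA ρ - Phi ρ := by
    filter_upwards [Ioo_mem_nhdsGT_of_mem (Set.left_mem_Ico.mpr hρ)] with c hc
    exact (key c hc).symm
  have := tendsto_nhds_unique (hconst2.congr' hev.symm) hconst
  linarith


def greal (ρ : ℝ) : ℝ :=
  2*ρ^3/(ρ^2+1) - 8*ρ/(ρ^2+1) * Dfun ρ - (ρ^2-1)*(2*lfun ρ - 2*ρ/(1+ρ^2))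

lemma greal_analyticAt (ρ : ℝ) : AnalyticAt ℝ greal ρ := by
  have hd1 : ((ρ:ℝ)^2 + 1) ≠ 0 := by positivity
  have hd2 : ((1:ℝ) + ρ^2) ≠ 0 := by positivity
  have hden : AnalyticAt ℝ (fun ρ : ℝ => ρ^2 + 1) ρ := (analyticAt_id.pow 2).add analyticAt_const
  have hden2 : AnalyticAt ℝ (fun ρ : ℝ => 1 + ρ^2) ρ := analyticAt_const.add (analyticAt_id.pow 2)
  apply AnalyticAt.sub
  apply AnalyticAt.sub
  · exact AnalyticAt.div (analyticAt_const.mul (analyticAt_id.pow 3)) hden hd1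
  · exact AnalyticAt.mul (AnalyticAt.div (analyticAt_const.mul analyticAt_id) hden hd1)
      (Dfun_analyticAt ρ)
  · apply AnalyticAt.mul ((analyticAt_id.pow 2).sub analyticAt_const)
    apply AnalyticAt.sub
    · exact analyticAt_const.mul (lfun_analyticAt ρ)
    · exact AnalyticAt.div (analyticAt_const.mul analyticAt_id) hden2 hd2

lemma greal_odd (ρ : ℝ) : greal (-ρ) = -greal ρ := by
  rw [greal, greal, Dfun_even, lfun_odd]
  ring

lemma greal_abs_le {ρ : ℝ} (hρ : |ρ| ≤ 1) : |greal ρ| ≤ 8 * |ρ|^3 := by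
  have h1 : (0:ℝ) < ρ^2 + 1 := by positivity
  have e1 : |2*ρ^3/(ρ^2+1)| ≤ 2*|ρ|^3 := by
    rw [abs_div, abs_of_pos h1, div_le_iff₀ h1]
    calc |2*ρ^3| = 2*|ρ|^3 := by rw [abs_mul, abs_pow]; norm_num
      _ ≤ 2*|ρ|^3 * (ρ^2+1) := by nlinarith [abs_nonneg ρ, pow_nonneg (abs_nonneg ρ) 3]
  have e2 : |8*ρ/(ρ^2+1) * Dfun ρ| ≤ 4*|ρ|^3 := by
    rw [abs_mul, abs_div, abs_of_pos h1]
    calc |8*ρ|/(ρ^2+1) * |Dfun ρ| ≤ |8*ρ| * (ρ^2/2) := by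
          apply mul_le_mul _ (Dfun_abs_le ρ) (abs_nonneg _) (abs_nonneg _)
          apply div_le_self (abs_nonneg _) (by nlinarith [sq_nonneg ρ])
      _ = 4 * (|ρ| * ρ^2) := by
          rw [abs_mul, abs_of_nonneg (by norm_num : (0:ℝ) ≤ 8)]; ring
      _ = 4 * |ρ|^3 := by rw [← sq_abs ρ]; ring
  have e3 : |(ρ^2-1)*(2*lfun ρ - 2*ρ/(1+ρ^2))| ≤ 2*|ρ|^3 := by
    rw [abs_mul]
    have h2 : |ρ^2 - 1| ≤ 1 := by
      rw [abs_le]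
      constructor <;> nlinarith [sq_abs ρ, abs_nonneg ρ, sq_nonneg ρ]
    calc |ρ^2-1| * |2*lfun ρ - 2*ρ/(1+ρ^2)| ≤ 1 * (2*|ρ|^3) := by
          apply mul_le_mul h2 (lfun_cubic_bound ρ) (abs_nonneg _) (by norm_num)
      _ = 2*|ρ|^3 := by ring
  calc |greal ρ| ≤ |2*ρ^3/(ρ^2+1)| + |8*ρ/(ρ^2+1) * Dfun ρ|
        + |(ρ^2-1)*(2*lfun ρ - 2*ρ/(1+ρ^2))| := by
        rw [greal]; exact (abs_sub _ _).trans (by gcongr; exact abs_sub _ _)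
    _ ≤ 8 * |ρ|^3 := by linarith

lemma one_le_log {ρ : ℝ} (hρ : 3 ≤ ρ) : 1 ≤ Real.log ρ := by
  have h1 : Real.exp 1 ≤ ρ := by
    have := Real.exp_one_lt_d9
    linarith
  calc (1:ℝ) = Real.log (Real.exp 1) := (Real.log_exp 1).symm
    _ ≤ Real.log ρ := Real.log_le_log (Real.exp_pos 1) h1

lemma Dfun_log_bound {ρ : ℝ} (hρ : 3 ≤ ρ) : Dfun ρ ≤ 3 * Real.log ρ ^ 2 := by
  have hρ0 : (0:ℝ) < ρ := by linarith
  have hL := one_le_log hρ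
  have huIcc : uIcc (1:ℝ) ρ = Icc 1 ρ := uIcc_of_le (by linarith)
  have hadd : Dfun 1 + (∫ u in (1:ℝ)..ρ, lfun u) = Dfun ρ :=
    intervalIntegral.integral_add_adjacent_intervals
      (lfun_cont.intervalIntegrable _ _) (lfun_cont.intervalIntegrable _ _)
  have hD1 : Dfun 1 ≤ 1/2 := by
    have := Dfun_le_sq (show (0:ℝ) ≤ 1 by norm_num)
    norm_num at this
    linarith
  have hcont : ContinuousOn (fun u : ℝ => (1 + 2*Real.log u)/u) (uIcc 1 ρ) := by
    rw [huIcc]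
    apply ContinuousOn.div
    · apply continuousOn_const.add
      apply continuousOn_const.mul
      apply Real.continuousOn_log.mono
      intro u hu
      simp only [mem_compl_iff, mem_singleton_iff]
      have : (1:ℝ) ≤ u := hu.1
      intro h; rw [h] at this; norm_num at this
    · exact continuousOn_id
    · intro u hu
      have : (1:ℝ) ≤ u := hu.1
      linarith
  have hmono : (∫ u in (1:ℝ)..ρ, lfun u) ≤ ∫ u in (1:ℝ)..ρ, (1 + 2*Real.log u)/u := by
    apply intervalIntegral.integral_mono_on (by linarith)
      (lfun_cont.intervalIntegrable _ _)
      hcont.intervalIntegrable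
    intro u hu
    have hu1 : (1:ℝ) ≤ u := hu.1
    have hu0 : (0:ℝ) < u := by linarith
    rw [lfun, div_le_div_iff_of_pos_right hu0]
    calc Real.log (1 + u^2) ≤ Real.log (2*u^2) := by
          apply Real.log_le_log (by positivity)
          nlinarith
      _ = Real.log 2 + 2*Real.log u := by
          rw [Real.log_mul (by norm_num) (by positivity), Real.log_pow]
          push_cast; ring
      _ ≤ 1 + 2*Real.log u := by
          have := Real.log_two_lt_d9
          linarith
  have hftc : (∫ u in (1:ℝ)..ρ, (1 + 2*Real.log u)/u)
      = Real.log ρ + Real.log ρ^2 := by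
    have hderiv : ∀ u ∈ uIcc (1:ℝ) ρ,
        HasDerivAt (fun u => Real.log u + Real.log u^2) ((1 + 2*Real.log u)/u) u := by
      intro u hu
      rw [huIcc] at hu
      have hu0 : (0:ℝ) < u := by linarith [hu.1]
      have h1 := Real.hasDerivAt_log (ne_of_gt hu0)
      have h2 := h1.pow 2
      have h3 : HasDerivAt (fun u => Real.log u + Real.log u^2) _ u := h1.add h2
      convert h3 using 1
      norm_num
      field_simp
    rw [intervalIntegral.integral_eq_sub_of_hasDerivAt hderiv
      hcont.intervalIntegrable]
    simp [Real.log_one]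
  rw [hftc] at hmono
  nlinarith [hL]

lemma greal_asym {ρ : ℝ} (hρ : 3 ≤ ρ) :
    |greal ρ - (4*ρ - 4*ρ*Real.log ρ)| ≤ 36 * (ρ⁻¹ * Real.log ρ^2) := by
  have hρ0 : (0:ℝ) < ρ := by linarith
  have hL := one_le_log hρ
  have hL2 : 1 ≤ Real.log ρ^2 := by nlinarith
  have hd1 : (ρ:ℝ)^2+1 ≠ 0 := by positivity
  set L := Real.log ρ with hLdef
  set M := Real.log (1+(ρ⁻¹)^2) with hMdef
  have hsplit : Real.log (1+ρ^2) = 2*L + M := by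
    have he : (1:ℝ)+ρ^2 = ρ^2 * (1+(ρ⁻¹)^2) := by field_simp; ring
    rw [he, Real.log_mul (by positivity) (by positivity), Real.log_pow]
    push_cast; ring
  have hident : greal ρ - (4*ρ - 4*ρ*L) =
      -(6*ρ/(ρ^2+1)) + 4*L/ρ - (2*(ρ^2-1)/ρ)*M - 8*ρ/(ρ^2+1)*Dfun ρ := by
    rw [greal, lfun, hsplit]
    field_simp
    ring
  have hM0 : 0 ≤ M := Real.log_nonneg (by nlinarith [sq_nonneg ρ⁻¹])
  have hM : M ≤ ρ⁻¹^2 := log_one_add_le (by positivity)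
  have hD0 : 0 ≤ Dfun ρ := Dfun_nonneg hρ0.le
  have hD := Dfun_log_bound hρ
  -- individual bounds
  have b1 : |(6*ρ/(ρ^2+1))| ≤ 6*L^2/ρ := by
    rw [abs_of_nonneg (by positivity)]
    rw [div_le_div_iff₀ (by positivity) hρ0]
    nlinarith
  have b2 : |4*L/ρ| ≤ 4*L^2/ρ := by
    rw [abs_of_nonneg (by positivity)]
    rw [div_le_div_iff_of_pos_right hρ0]
    nlinarith
  have b3 : |(2*(ρ^2-1)/ρ)*M| ≤ 2*L^2/ρ := by
    have hfac : (0:ℝ) ≤ 2*(ρ^2-1)/ρ := by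
      apply div_nonneg _ hρ0.le
      nlinarith
    rw [abs_of_nonneg (mul_nonneg hfac hM0)]
    have h1 : (2*(ρ^2-1)/ρ)*M ≤ (2*ρ)*(ρ⁻¹^2) := by
      apply mul_le_mul _ hM hM0 (by positivity)
      rw [div_le_iff₀ hρ0]; nlinarith
    have h2 : (2*ρ)*(ρ⁻¹^2) = 2/ρ := by field_simp
    rw [h2] at h1
    have h3 : 2/ρ ≤ 2*L^2/ρ := by
      rw [div_le_div_iff_of_pos_right hρ0]; nlinarith
    linarith
  have b4 : |8*ρ/(ρ^2+1)*Dfun ρ| ≤ 24*L^2/ρ := by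
    rw [abs_of_nonneg (by positivity)]
    have h1 : 8*ρ/(ρ^2+1) ≤ 8/ρ := by
      rw [div_le_div_iff₀ (by positivity) hρ0]; nlinarith
    calc 8*ρ/(ρ^2+1)*Dfun ρ ≤ (8/ρ)*(3*L^2) := by
          apply mul_le_mul h1 hD hD0 (by positivity)
      _ = 24*L^2/ρ := by field_simp; ring
  have htri : |greal ρ - (4*ρ - 4*ρ*L)| ≤ |(6*ρ/(ρ^2+1))| + |4*L/ρ|
      + |(2*(ρ^2-1)/ρ)*M| + |8*ρ/(ρ^2+1)*Dfun ρ| := by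
    rw [hident]
    calc |(-(6*ρ/(ρ^2+1)) + 4*L/ρ - (2*(ρ^2-1)/ρ)*M - 8*ρ/(ρ^2+1)*Dfun ρ)|
        ≤ |(-(6*ρ/(ρ^2+1)) + 4*L/ρ - (2*(ρ^2-1)/ρ)*M)| + |8*ρ/(ρ^2+1)*Dfun ρ| :=
          abs_sub _ _
      _ ≤ |(-(6*ρ/(ρ^2+1)) + 4*L/ρ)| + |(2*(ρ^2-1)/ρ)*M| + |8*ρ/(ρ^2+1)*Dfun ρ| := by
          gcongr; exact abs_sub _ _
      _ ≤ |(6*ρ/(ρ^2+1))| + |4*L/ρ| + |(2*(ρ^2-1)/ρ)*M| + |8*ρ/(ρ^2+1)*Dfun ρ| := by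
          gcongr
          calc |(-(6*ρ/(ρ^2+1)) + 4*L/ρ)| ≤ |(-(6*ρ/(ρ^2+1)))| + |4*L/ρ| := abs_add_le _ _
            _ = |(6*ρ/(ρ^2+1))| + |4*L/ρ| := by rw [abs_neg]
  have hfin : 6*L^2/ρ + 4*L^2/ρ + 2*L^2/ρ + 24*L^2/ρ = 36 * (ρ⁻¹ * L^2) := by
    field_simp; ring
  linarith

/-- The closed form of the variation-of-constants integral for `ρ > 0`. -/
lemma integral_eq_greal {ρ : ℝ} (hρ : 0 < ρ) :
    (∫ s in (0:ℝ)..ρ, s * (h1f ρ * h2f s - h1f s * h2f ρ) * h1f s) = greal ρ := by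
  have hinteq : (fun s => s * (h1f ρ * h2f s - h1f s * h2f ρ) * h1f s)
      = (fun s => h1f ρ * N1 s - h2f ρ * N2 s) := funext fun s => integrand_eq _ _ s
  rw [hinteq, intervalIntegral.integral_sub (f := fun s => h1f ρ * N1 s) (g := fun s => h2f ρ * N2 s)
    ((continuous_const.mul N1_cont).intervalIntegrable _ _)
    ((continuous_const.mul N2_cont).intervalIntegrable _ _),
    intervalIntegral.integral_const_mul, intervalIntegral.integral_const_mul,
    A_int hρ, B_int ρ]
  rw [Phi, Bfun, greal, lfun, h1f, h2f]
  have h0 : ρ ≠ 0 := ne_of_gt hρ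
  have h1 : ρ^2 + 1 ≠ 0 := by positivity
  have h2 : (1:ℝ) + ρ^2 ≠ 0 := by positivity
  field_simp
  ring

/-- (a) `z¹` extends to an odd `C^∞` function on `ℝ` which is `O(ρ³)` at `0`;
(b) `z¹(ρ) = d₁ρ - d₁ρ ln ρ + O(ρ⁻¹ (ln ρ)²)` as `ρ → ∞`. -/
theorem z1sol_asymptotics (d : ℂ) :
    (∃ g : ℝ → ℂ, ContDiff ℝ (⊤ : ℕ∞) g ∧ (∀ ρ : ℝ, g (-ρ) = -g ρ) ∧
      EqOn g (z1sol d) (Ioi 0) ∧ (g =O[𝓝 (0:ℝ)] fun ρ => ρ ^ 3)) ∧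
    (∃ d₁ : ℂ,
      (fun ρ : ℝ => z1sol d ρ - (d₁ * (ρ : ℝ) - d₁ * (ρ : ℝ) * (Real.log ρ : ℝ)))
        =O[atTop] fun ρ : ℝ => ρ⁻¹ * Real.log ρ ^ 2) := by
  constructor
  · refine ⟨fun ρ => (d/4) * ((greal ρ : ℝ) : ℂ), ?_, ?_, ?_, ?_⟩
    · rw [contDiff_iff_contDiffAt]
      intro ρ
      have h : AnalyticAt ℝ (fun ρ : ℝ => (d/4) * ((greal ρ : ℝ) : ℂ)) ρ :=
        analyticAt_const.mul ((Complex.ofRealCLM.analyticAt _).comp (greal_analyticAt ρ))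
      exact h.contDiffAt
    · intro ρ
      simp only []
      rw [greal_odd]
      push_cast
      ring
    · intro ρ hρ
      simp only [z1sol]
      rw [integral_eq_greal (mem_Ioi.mp hρ)]
    · rw [Asymptotics.isBigO_iff]
      refine ⟨2 * ‖d‖, ?_⟩
      filter_upwards [Metric.ball_mem_nhds (0:ℝ) one_pos] with ρ hρ
      have habs : |ρ| ≤ 1 := by
        rw [Metric.mem_ball, dist_zero_right, Real.norm_eq_abs] at hρ
        linarith
      have h1 : ‖(d/4) * ((greal ρ : ℝ) : ℂ)‖ = ‖d‖/4 * |greal ρ| := by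
        rw [norm_mul, norm_div, Complex.norm_real, Real.norm_eq_abs]
        norm_num
      rw [h1]
      have h2 : ‖ρ^3‖ = |ρ|^3 := by rw [Real.norm_eq_abs, abs_pow]
      rw [h2]
      have := greal_abs_le habs
      have hn : (0:ℝ) ≤ ‖d‖ := norm_nonneg d
      nlinarith [abs_nonneg (greal ρ), pow_nonneg (abs_nonneg ρ) 3]
  · refine ⟨d, ?_⟩
    rw [Asymptotics.isBigO_iff]
    refine ⟨9 * ‖d‖, ?_⟩
    filter_upwards [eventually_ge_atTop (3:ℝ)] with ρ hρ
    have hρ0 : (0:ℝ) < ρ := by linarith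
    have hz : z1sol d ρ - (d * (ρ:ℝ) - d * (ρ:ℝ) * (Real.log ρ : ℝ))
        = (d/4) * ((greal ρ - (4*ρ - 4*ρ*Real.log ρ) : ℝ) : ℂ) := by
      rw [z1sol, integral_eq_greal hρ0]
      push_cast
      ring
    rw [hz, norm_mul, norm_div, Complex.norm_real, Real.norm_eq_abs]
    have h4 : ‖(4:ℂ)‖ = 4 := by norm_num
    rw [h4]
    have hb := greal_asym hρ
    have hn : (0:ℝ) ≤ ‖d‖ := norm_nonneg d
    have hpos : (0:ℝ) ≤ ρ⁻¹ * Real.log ρ ^ 2 := by positivity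
    rw [Real.norm_eq_abs, abs_of_nonneg hpos]
    nlinarith [abs_nonneg (greal ρ - (4*ρ - 4*ρ*Real.log ρ))]
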